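/- arXiv:1705.02205 — 3 statements merged into one kernel-verified Lean document; each statement's English description precedes it below -/
import Mathlib

section
/- For each fixed N_E ≥ 0 there exists a unique N_I with 0 < N_I < 1/τ_I satisfying N_I · (τ_I + I_2(N_E,N_I)) = 1. (Indeed, the function f(N_I) := N_I(τ_I + I_2(N_E,N_I)) is continuous and strictly increasing on [0,1/τ_I], with f(0)=0 and f(1/τ_I) = 1 + I_2(N_E,1/τ_I)/τ_I > 1.) -/
/-- K(w_R, w_F) := ∫_0^∞ (e^{-s²/2}/s)(e^{s·w_F} − e^{s·w_R}) ds (Lebesgue integral on (0,∞)). -/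
noncomputable def K (wR wF : ℝ) : ℝ :=
  ∫ s in Set.Ioi (0 : ℝ), Real.exp (-s ^ 2 / 2) / s * (Real.exp (s * wF) - Real.exp (s * wR))

/-- I₂(N_E,N_I) with V_0^I(N_E,N_I) := b_E^I N_E − b_I^I N_I + (b_E^I − b_E^E) ν_{E,ext}. -/
noncomputable def I2 (VR VF bEE bEI bII aI ν NE NI : ℝ) : ℝ :=
  K ((VR - (bEI * NE - bII * NI + (bEI - bEE) * ν)) / Real.sqrt aI)
    ((VF - (bEI * NE - bII * NI + (bEI - bEE) * ν)) / Real.sqrt aI)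

open MeasureTheory Real Set

lemma aux_integrable_gauss_lin (a : ℝ) :
    Integrable (fun s : ℝ => Real.exp (-s ^ 2 / 2 + s * a)) := by
  have h : Integrable (fun s : ℝ => Real.exp (a ^ 2 / 2) * Real.exp (-(1/2) * (s - a) ^ 2)) :=
    ((integrable_exp_neg_mul_sq (by norm_num : (0:ℝ) < 1/2)).comp_sub_right a).const_mul _
  refine h.congr (Filter.Eventually.of_forall fun s => ?_)
  simp only [← Real.exp_add]
  ring_nf

lemma aux_exp_diff_le {x y : ℝ} (h : y ≤ x) :
    Real.exp x - Real.exp y ≤ (x - y) * Real.exp x := by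
  have h1 : (y - x) + 1 ≤ Real.exp (y - x) := Real.add_one_le_exp _
  have h2 : Real.exp y = Real.exp x * Real.exp (y - x) := by
    rw [← Real.exp_add]; ring_nf
  nlinarith [Real.exp_pos x]

lemma aux_nonneg {wR wF : ℝ} (h : wR ≤ wF) {s : ℝ} (hs : 0 < s) :
    0 ≤ Real.exp (-s ^ 2 / 2) / s * (Real.exp (s * wF) - Real.exp (s * wR)) := by
  have h1 := Real.exp_le_exp.2 (mul_le_mul_of_nonneg_left h hs.le)
  have h2 : (0:ℝ) ≤ Real.exp (-s ^ 2 / 2) / s := by positivity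
  exact mul_nonneg h2 (by linarith)

lemma aux_pos {wR wF : ℝ} (h : wR < wF) {s : ℝ} (hs : 0 < s) :
    0 < Real.exp (-s ^ 2 / 2) / s * (Real.exp (s * wF) - Real.exp (s * wR)) := by
  have h1 := Real.exp_lt_exp.2 (mul_lt_mul_of_pos_left h hs)
  have h2 : (0:ℝ) < Real.exp (-s ^ 2 / 2) / s := by positivity
  exact mul_pos h2 (by linarith)

lemma aux_bound {wR wF : ℝ} (h : wR ≤ wF) {s : ℝ} (hs : 0 < s) :
    Real.exp (-s ^ 2 / 2) / s * (Real.exp (s * wF) - Real.exp (s * wR))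
      ≤ (wF - wR) * Real.exp (-s ^ 2 / 2 + s * wF) := by
  have h1 : Real.exp (s * wF) - Real.exp (s * wR) ≤ (s * wF - s * wR) * Real.exp (s * wF) :=
    aux_exp_diff_le (mul_le_mul_of_nonneg_left h hs.le)
  have h2 : Real.exp (-s ^ 2 / 2 + s * wF) = Real.exp (-s ^ 2 / 2) * Real.exp (s * wF) :=
    Real.exp_add _ _
  rw [h2]
  rw [div_mul_eq_mul_div, div_le_iff₀ hs]
  calc Real.exp (-s ^ 2 / 2) * (Real.exp (s * wF) - Real.exp (s * wR))
      ≤ Real.exp (-s ^ 2 / 2) * ((s * wF - s * wR) * Real.exp (s * wF)) := by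
        exact mul_le_mul_of_nonneg_left h1 (Real.exp_pos _).le
    _ = (wF - wR) * (Real.exp (-s ^ 2 / 2) * Real.exp (s * wF)) * s := by ring

lemma aux_meas (wR wF : ℝ) :
    Measurable (fun s : ℝ =>
      Real.exp (-s ^ 2 / 2) / s * (Real.exp (s * wF) - Real.exp (s * wR))) := by
  measurability

lemma aux_integrableOn {wR wF : ℝ} (h : wR ≤ wF) :
    IntegrableOn (fun s : ℝ =>
      Real.exp (-s ^ 2 / 2) / s * (Real.exp (s * wF) - Real.exp (s * wR))) (Set.Ioi 0) := by
  refine Integrable.mono' (((aux_integrable_gauss_lin wF).const_mul (wF - wR)).integrableOn)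
    (aux_meas wR wF).aestronglyMeasurable ?_
  rw [ae_restrict_iff' measurableSet_Ioi]
  filter_upwards with s hs
  rw [Real.norm_eq_abs, abs_of_nonneg (aux_nonneg h hs)]
  exact aux_bound h hs

lemma K_nonneg {wR wF : ℝ} (h : wR ≤ wF) : 0 ≤ K wR wF :=
  setIntegral_nonneg measurableSet_Ioi fun _ hs => aux_nonneg h hs

lemma K_pos {wR wF : ℝ} (h : wR < wF) : 0 < K wR wF := by
  rw [K, setIntegral_pos_iff_support_of_nonneg_ae
    ((ae_restrict_iff' measurableSet_Ioi).2
      (Filter.Eventually.of_forall fun s hs => aux_nonneg h.le hs))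
    (aux_integrableOn h.le)]
  have hsub : Set.Ioi (0:ℝ) ⊆
      (Function.support fun s =>
        Real.exp (-s ^ 2 / 2) / s * (Real.exp (s * wF) - Real.exp (s * wR))) ∩ Set.Ioi 0 :=
    fun s hs => ⟨(aux_pos h hs).ne', hs⟩
  calc (0:ENNReal) < volume (Set.Ioi (0:ℝ)) := by simp [Real.volume_Ioi]
    _ ≤ _ := measure_mono hsub

lemma K_shift_mono {A B : ℝ} (hAB : A ≤ B) {c c' : ℝ} (hcc : c ≤ c') :
    K (A + c) (B + c) ≤ K (A + c') (B + c') := by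
  refine setIntegral_mono_on (aux_integrableOn (by linarith)) (aux_integrableOn (by linarith))
    measurableSet_Ioi fun s hs => ?_
  have hs : (0:ℝ) < s := hs
  have h1 : Real.exp (s * (B + c)) - Real.exp (s * (A + c))
      ≤ Real.exp (s * (B + c')) - Real.exp (s * (A + c')) := by
    have e1 : ∀ x y : ℝ, Real.exp (s * (x + y)) = Real.exp (s * x) * Real.exp (s * y) := by
      intro x y; rw [← Real.exp_add]; ring_nf
    rw [e1, e1, e1, e1, ← sub_mul, ← sub_mul]
    have h2 : (0:ℝ) ≤ Real.exp (s * B) - Real.exp (s * A) := by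
      have := Real.exp_le_exp.2 (mul_le_mul_of_nonneg_left hAB hs.le)
      linarith
    exact mul_le_mul_of_nonneg_left (Real.exp_le_exp.2 (mul_le_mul_of_nonneg_left hcc hs.le)) h2
  have h3 : (0:ℝ) ≤ Real.exp (-s ^ 2 / 2) / s := by positivity
  exact mul_le_mul_of_nonneg_left h1 h3

lemma K_shift_continuous {A B : ℝ} (hAB : A ≤ B) :
    Continuous (fun c : ℝ => K (A + c) (B + c)) := by
  rw [continuous_iff_continuousAt]
  intro c0
  apply continuousAt_of_dominated (μ := volume.restrict (Set.Ioi (0:ℝ)))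
    (bound := fun s => (B - A) * Real.exp (-s ^ 2 / 2 + s * (B + c0 + 1)))
  · exact Filter.Eventually.of_forall fun c => (aux_meas _ _).aestronglyMeasurable
  · have hball : Metric.ball c0 1 ∈ nhds c0 := Metric.ball_mem_nhds _ one_pos
    refine Filter.eventually_of_mem hball fun c hc => ?_
    rw [ae_restrict_iff' measurableSet_Ioi]
    filter_upwards with s hs
    have hs : (0:ℝ) < s := hs
    have hc' : c ≤ c0 + 1 := by
      have := abs_lt.1 (mem_ball_iff_norm.1 hc)
      linarith [this.2]
    rw [Real.norm_eq_abs, abs_of_nonneg (aux_nonneg (by linarith) hs)]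
    calc Real.exp (-s ^ 2 / 2) / s * (Real.exp (s * (B + c)) - Real.exp (s * (A + c)))
        ≤ ((B + c) - (A + c)) * Real.exp (-s ^ 2 / 2 + s * (B + c)) :=
          aux_bound (by linarith) hs
      _ ≤ (B - A) * Real.exp (-s ^ 2 / 2 + s * (B + c0 + 1)) := by
          have hle : Real.exp (-s ^ 2 / 2 + s * (B + c)) ≤
              Real.exp (-s ^ 2 / 2 + s * (B + c0 + 1)) := by
            apply Real.exp_le_exp.2
            nlinarith
          have hBA : ((B + c) - (A + c)) = B - A := by ring
          rw [hBA]
          exact mul_le_mul_of_nonneg_left hle (by linarith)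
  · exact ((aux_integrable_gauss_lin _).const_mul _).integrableOn
  · filter_upwards with s
    fun_prop

/- STATEMENT 5: For each fixed N_E ≥ 0 there exists a unique N_I with 0 < N_I < 1/τ_I
satisfying N_I · (τ_I + I_2(N_E,N_I)) = 1. -/
theorem exists_unique_NI (VR VF bEE bIE bEI bII τE τI aE aI ν : ℝ)
    (hV : VR < VF) (hbEE : 0 < bEE) (hbIE : 0 < bIE) (hbEI : 0 < bEI) (hbII : 0 < bII)
    (hτE : 0 < τE) (hτI : 0 < τI) (haE : 0 < aE) (haI : 0 < aI) (hν : 0 ≤ ν)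
    (NE : ℝ) (hNE : 0 ≤ NE) :
    ∃! NI : ℝ, NI ∈ Set.Ioo 0 (1 / τI) ∧ NI * (τI + I2 VR VF bEE bEI bII aI ν NE NI) = 1 := by
  have hr : 0 < Real.sqrt aI := Real.sqrt_pos.2 haI
  have hr' : Real.sqrt aI ≠ 0 := hr.ne'
  obtain ⟨A, B, t, hAB, htpos, hI2⟩ :
      ∃ A B t : ℝ, A < B ∧ 0 < t ∧
        ∀ x : ℝ, I2 VR VF bEE bEI bII aI ν NE x = K (A + t * x) (B + t * x) := by
    refine ⟨(VR - bEI * NE - (bEI - bEE) * ν) / Real.sqrt aI,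
      (VF - bEI * NE - (bEI - bEE) * ν) / Real.sqrt aI, bII / Real.sqrt aI, ?_, ?_, ?_⟩
    · exact div_lt_div_of_pos_right (by linarith) hr
    · exact div_pos hbII hr
    · intro x
      unfold I2
      congr 1 <;> (field_simp; ring)
  set f : ℝ → ℝ := fun x => x * (τI + K (A + t * x) (B + t * x)) with hf
  have hmono : ∀ x y : ℝ, 0 ≤ x → x < y → f x < f y := by
    intro x y hx hxy
    have h1 : 0 < τI + K (A + t * x) (B + t * x) := by
      have := K_nonneg (by linarith : A + t * x ≤ B + t * x)
      linarith
    have h2 : K (A + t * x) (B + t * x) ≤ K (A + t * y) (B + t * y) :=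
      K_shift_mono hAB.le (by nlinarith)
    calc f x = x * (τI + K (A + t * x) (B + t * x)) := rfl
      _ < y * (τI + K (A + t * x) (B + t * x)) := mul_lt_mul_of_pos_right hxy h1
      _ ≤ y * (τI + K (A + t * y) (B + t * y)) :=
          mul_le_mul_of_nonneg_left (by linarith) (by linarith)
      _ = f y := rfl
  have hfc : Continuous f := by
    apply continuous_id'.mul
    apply continuous_const.add
    exact (K_shift_continuous hAB.le).comp (continuous_const.mul continuous_id')
  have hτI' : (0:ℝ) < 1 / τI := one_div_pos.2 hτI
  have hf0 : f 0 = 0 := by simp [hf]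
  have hftop : 1 < f (1 / τI) := by
    have hg : 0 < K (A + t * (1 / τI)) (B + t * (1 / τI)) := K_pos (by linarith)
    have he : f (1 / τI) = 1 / τI * (τI + K (A + t * (1 / τI)) (B + t * (1 / τI))) := rfl
    have h1 : 1 / τI * τI = 1 := by field_simp
    rw [he]
    nlinarith
  have hiv := intermediate_value_Ioo hτI'.le hfc.continuousOn
  have h1mem : (1:ℝ) ∈ Set.Ioo (f 0) (f (1 / τI)) := by
    rw [hf0]; exact ⟨one_pos, hftop⟩
  obtain ⟨x, hx, hfx⟩ := hiv h1mem
  refine ⟨x, ⟨hx, by rw [hI2 x]; exact hfx⟩, ?_⟩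
  rintro y ⟨hy, hye⟩
  rw [hI2 y] at hye
  have hfy : f y = 1 := hye
  rcases lt_trichotomy y x with h | h | h
  · exfalso
    have := hmono y x hy.1.le h
    rw [hfx, hfy] at this
    exact lt_irrefl 1 this
  · exact h
  · exfalso
    have := hmono x y hx.1.le h
    rw [hfx, hfy] at this
    exact lt_irrefl 1 this
end

section
/- Fix b_E^E, b_I^E, b_E^I, b_I^I > 0, τ_I > 0, a_E, a_I > 0, ν_{E,ext} ≥ 0 and V_R < V_F. Then there exists T > 0 such that for every excitatory refractory period τ_E > T, the steady-state system N_E(τ_E + I_1(N_E,N_I)) = 1, N_I(τ_I + I_2(N_E,N_I)) = 1 (with 0 < N_E < 1/τ_E, 0 < N_I < 1/τ_I) has exactly one solution; i.e., if τ_E is large enough in comparison with the other parameters, the steady state is unique. -/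
/-- I₁(N_E,N_I) with V_0^E(N_E,N_I) := b_E^E N_E − b_I^E N_I + (b_E^E − b_E^E) ν_{E,ext}. -/
noncomputable def I1 (VR VF bEE bIE aE ν NE NI : ℝ) : ℝ :=
  K ((VR - (bEE * NE - bIE * NI + (bEE - bEE) * ν)) / Real.sqrt aE)
    ((VF - (bEE * NE - bIE * NI + (bEE - bEE) * ν)) / Real.sqrt aE)

/-!
For fixed `N_E`, `I₂` is nondecreasing in `N_I` (raising `N_I` lowers `V_0^I`, which shifts both
arguments of `K` up), so `N_I ↦ N_I (τ_I + I₂)` grows with slope at least `τ_I` and the second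
equation has a unique root `φ(N_E)`, Lipschitz in `N_E`. Substituting it leaves the scalar equation
`N_E (τ_E + G(N_E)) = 1` with `G(N_E) = I₁(N_E, φ(N_E))` positive and `A`-Lipschitz; on
`[0, 1/τ_E]` its left side grows with slope at least `τ_E - A / τ_E`, which is positive once
`τ_E > 1 + A`. The kernel `K` enters only through three properties: it is positive when
`w_R < w_F`, monotone under a common upward shift of its arguments, and locally Lipschitz, by a
Gaussian-weighted mean value bound on its integrand.
-/

open MeasureTheory Real Set Function
open scoped NNReal

lemma abs_exp_sub_exp_le {a b M : ℝ} (ha : a ≤ M) (hb : b ≤ M) :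
    |exp b - exp a| ≤ exp M * |b - a| := by
  wlog hab : a ≤ b generalizing a b
  · rw [abs_sub_comm, abs_sub_comm b]
    exact this hb ha (le_of_not_ge hab)
  rw [abs_of_nonneg (sub_nonneg.2 (exp_le_exp.2 hab)), abs_of_nonneg (sub_nonneg.2 hab)]
  have h := add_one_le_exp (a - b)
  rw [exp_sub, le_div_iff₀ (exp_pos b)] at h
  calc exp b - exp a ≤ exp b * (b - a) := by linarith
    _ ≤ exp M * (b - a) := by gcongr

lemma integrable_exp_neg_sq_div_two_add_mul (M : ℝ) :
    Integrable fun s : ℝ => exp (-s ^ 2 / 2 + s * M) := by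
  have h : (fun s : ℝ => exp (-s ^ 2 / 2 + s * M)) =
      fun s => exp (M ^ 2 / 2) * exp (-(1 / 2) * (s - M) ^ 2) := by
    funext s
    rw [← exp_add]
    ring_nf
  rw [h]
  exact ((integrable_exp_neg_mul_sq (by norm_num)).comp_sub_right M).const_mul _

noncomputable def kIntegrand (x y s : ℝ) : ℝ :=
  exp (-s ^ 2 / 2) / s * (exp (s * y) - exp (s * x))

lemma K_eq_integral_kIntegrand (x y : ℝ) : K x y = ∫ s in Ioi 0, kIntegrand x y s := rfl

lemma abs_kIntegrand_le {x y M s : ℝ} (hx : x ≤ M) (hy : y ≤ M) (hs : 0 < s) :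
    |kIntegrand x y s| ≤ exp (-s ^ 2 / 2 + s * M) * |y - x| := by
  have h := abs_exp_sub_exp_le (mul_le_mul_of_nonneg_left hx hs.le)
    (mul_le_mul_of_nonneg_left hy hs.le)
  calc |kIntegrand x y s| = exp (-s ^ 2 / 2) / s * |exp (s * y) - exp (s * x)| := by
        rw [kIntegrand, abs_mul, abs_of_pos (by positivity)]
    _ ≤ exp (-s ^ 2 / 2) / s * (exp (s * M) * |s * y - s * x|) := by gcongr
    _ = exp (-s ^ 2 / 2 + s * M) * |y - x| := by
        rw [← mul_sub, abs_mul, abs_of_pos hs, exp_add]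
        field_simp

lemma kIntegrand_nonneg {x y s : ℝ} (hxy : x ≤ y) (hs : 0 < s) : 0 ≤ kIntegrand x y s := by
  unfold kIntegrand
  have : exp (s * x) ≤ exp (s * y) := exp_le_exp.2 (by gcongr)
  have : 0 ≤ exp (-s ^ 2 / 2) / s := by positivity
  nlinarith

lemma kIntegrand_pos {x y s : ℝ} (hxy : x < y) (hs : 0 < s) : 0 < kIntegrand x y s := by
  unfold kIntegrand
  have : exp (s * x) < exp (s * y) := exp_lt_exp.2 (by gcongr)
  have : 0 < exp (-s ^ 2 / 2) / s := by positivity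
  nlinarith

lemma kIntegrand_add (x y δ s : ℝ) :
    kIntegrand (x + δ) (y + δ) s = exp (s * δ) * kIntegrand x y s := by
  simp only [kIntegrand, mul_add, exp_add]
  ring

lemma integrableOn_kIntegrand (x y : ℝ) : IntegrableOn (kIntegrand x y) (Ioi 0) := by
  refine Integrable.mono'
    ((integrable_exp_neg_sq_div_two_add_mul (max x y)).integrableOn.mul_const |y - x|) ?_ ?_
  · refine ContinuousOn.aestronglyMeasurable ?_ measurableSet_Ioi
    exact (ContinuousOn.div (by fun_prop) continuousOn_id fun s hs => ne_of_gt hs).mul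
      (by fun_prop)
  · filter_upwards [ae_restrict_mem measurableSet_Ioi] with s hs
    exact abs_kIntegrand_le (le_max_left x y) (le_max_right x y) hs

lemma K_add_K (x y z : ℝ) : K x y + K y z = K x z := by
  simp only [K_eq_integral_kIntegrand]
  rw [← integral_add (integrableOn_kIntegrand x y) (integrableOn_kIntegrand y z)]
  congr 1
  funext s
  simp only [kIntegrand]
  ring

lemma K_pos_s8 {x y : ℝ} (hxy : x < y) : 0 < K x y := by
  rw [K_eq_integral_kIntegrand, setIntegral_pos_iff_support_of_nonneg_ae
    (ae_restrict_of_forall_mem measurableSet_Ioi fun s hs => kIntegrand_nonneg hxy.le hs)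
    (integrableOn_kIntegrand x y)]
  calc 0 < volume (Ioi (0 : ℝ)) := by simp
    _ ≤ _ := measure_mono (subset_inter (fun s hs => (kIntegrand_pos hxy hs).ne') subset_rfl)

lemma K_le_K_add {x y δ : ℝ} (hxy : x ≤ y) (hδ : 0 ≤ δ) : K x y ≤ K (x + δ) (y + δ) := by
  rw [K_eq_integral_kIntegrand, K_eq_integral_kIntegrand]
  refine setIntegral_mono_on (integrableOn_kIntegrand x y) (integrableOn_kIntegrand _ _)
    measurableSet_Ioi fun s hs => ?_
  rw [kIntegrand_add]
  exact le_mul_of_one_le_left (kIntegrand_nonneg hxy hs)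
    (one_le_exp (mul_nonneg (le_of_lt hs) hδ))

lemma abs_K_le {x y M : ℝ} (hx : x ≤ M) (hy : y ≤ M) :
    |K x y| ≤ (∫ s in Ioi 0, exp (-s ^ 2 / 2 + s * M)) * |y - x| := by
  rw [K_eq_integral_kIntegrand, ← integral_mul_const, ← Real.norm_eq_abs]
  refine norm_integral_le_of_norm_le
    ((integrable_exp_neg_sq_div_two_add_mul M).integrableOn.mul_const _) ?_
  filter_upwards [ae_restrict_mem measurableSet_Ioi] with s hs
  exact abs_kIntegrand_le hx hy hs

lemma lipschitzOnWith_uncurry_K (M : ℝ) :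
    ∃ C, LipschitzOnWith C (uncurry K) (Iic M ×ˢ Iic M) := by
  set C := ∫ s in Ioi 0, exp (-s ^ 2 / 2 + s * M)
  refine ⟨2 * C.toNNReal, LipschitzOnWith.of_dist_le_mul ?_⟩
  rintro ⟨x, y⟩ ⟨hx, hy⟩ ⟨x', y'⟩ ⟨hx', hy'⟩
  have hdiff : K x y - K x' y' = K x x' - K y y' := by
    linarith [K_add_K x x' y, K_add_K x' y y']
  have hC : 0 ≤ C := setIntegral_nonneg measurableSet_Ioi fun s _ => (exp_pos _).le
  have h1 := abs_K_le hx hx'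
  have h2 := abs_K_le hy hy'
  rw [abs_sub_comm x'] at h1
  rw [abs_sub_comm y'] at h2
  simp only [uncurry_apply_pair, Real.dist_eq, Prod.dist_eq, NNReal.coe_mul,
    NNReal.coe_ofNat, Real.coe_toNNReal _ hC, hdiff]
  calc |K x x' - K y y'| ≤ C * |x - x'| + C * |y - y'| :=
        (abs_sub _ _).trans (add_le_add h1 h2)
    _ ≤ 2 * C * max |x - x'| |y - y'| := by
        nlinarith [le_max_left |x - x'| |y - y'|, le_max_right |x - x'| |y - y'|]

lemma locallyLipschitz_uncurry_K : LocallyLipschitz (uncurry K) := by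
  intro p
  obtain ⟨C, hC⟩ := lipschitzOnWith_uncurry_K (max p.1 p.2 + 1)
  exact ⟨C, _, prod_mem_nhds (Iic_mem_nhds (by linarith [le_max_left p.1 p.2]))
    (Iic_mem_nhds (by linarith [le_max_right p.1 p.2])), hC⟩

lemma K_sub_div_pos {c d σ : ℝ} (hcd : c < d) (hσ : 0 < σ) (v : ℝ) :
    0 < K ((c - v) / σ) ((d - v) / σ) :=
  K_pos_s8 (div_lt_div_of_pos_right (sub_lt_sub_right hcd v) hσ)

lemma antitone_K_sub_div {c d σ : ℝ} (hcd : c ≤ d) (hσ : 0 < σ) :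
    Antitone fun v => K ((c - v) / σ) ((d - v) / σ) := by
  intro v v' hvv'
  have hshift : ∀ e, (e - v) / σ = (e - v') / σ + (v' - v) / σ := fun e => by ring
  simp only [hshift c, hshift d]
  exact K_le_K_add (div_le_div_of_nonneg_right (sub_le_sub_right hcd v') hσ.le)
    (div_nonneg (sub_nonneg.2 hvv') hσ.le)

lemma locallyLipschitz_K_sub_div (c d σ : ℝ) {V : ℝ × ℝ → ℝ} (hV : ContDiff ℝ 1 V) :
    LocallyLipschitz fun p => K ((c - V p) / σ) ((d - V p) / σ) := by
  have hw : ContDiff ℝ 1 fun p => ((c - V p) / σ, (d - V p) / σ) := by fun_prop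
  exact locallyLipschitz_uncurry_K.comp hw.locallyLipschitz

section RootOfMulAdd

variable {a A : ℝ} {g : ℝ → ℝ}

lemma sub_div_mul_sub_le_mul_add_sub_mul_add {x y : ℝ} (hA : 0 ≤ A) (hx : 0 ≤ x)
    (hxa : x ≤ 1 / a) (hxy : x ≤ y) (hgy : 0 ≤ g y) (hg : -(A * (y - x)) ≤ g y - g x) :
    (a - A / a) * (y - x) ≤ y * (a + g y) - x * (a + g x) := by
  have h1 : x * (A * (y - x)) ≤ 1 / a * (A * (y - x)) :=
    mul_le_mul_of_nonneg_right hxa (mul_nonneg hA (sub_nonneg.2 hxy))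
  have h2 : 0 ≤ (y - x) * g y := mul_nonneg (sub_nonneg.2 hxy) hgy
  have h3 : x * -(A * (y - x)) ≤ x * (g y - g x) := mul_le_mul_of_nonneg_left hg hx
  have h4 : A / a = 1 / a * A := by ring
  rw [h4]
  linarith

lemma strictMonoOn_mul_add (ha : 0 < a) (hA : 0 ≤ A) (hAa : A < a ^ 2)
    (hg0 : ∀ x ∈ Icc 0 (1 / a), 0 ≤ g x)
    (hg : ∀ x ∈ Icc 0 (1 / a), ∀ y ∈ Icc 0 (1 / a), x ≤ y → -(A * (y - x)) ≤ g y - g x) :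
    StrictMonoOn (fun x => x * (a + g x)) (Icc 0 (1 / a)) := by
  intro x hx y hy hxy
  have hslope : 0 < a - A / a := by
    rw [sub_pos, div_lt_iff₀ ha]
    nlinarith
  have := sub_div_mul_sub_le_mul_add_sub_mul_add hA hx.1 hx.2 hxy.le (hg0 y hy)
    (hg x hx y hy hxy.le)
  nlinarith [mul_pos hslope (sub_pos.2 hxy)]

lemma existsUnique_mul_add_eq_one (ha : 0 < a) (hcont : ContinuousOn g (Icc 0 (1 / a)))
    (hpos : 0 < g (1 / a)) (hmono : StrictMonoOn (fun x => x * (a + g x)) (Icc 0 (1 / a))) :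
    ∃! x, x ∈ Ioo 0 (1 / a) ∧ x * (a + g x) = 1 := by
  have h0 : 0 * (a + g 0) = 0 := zero_mul _
  have h1 : 1 < 1 / a * (a + g (1 / a)) := by
    rw [mul_add, one_div_mul_cancel ha.ne']
    linarith [mul_pos (one_div_pos.2 ha) hpos]
  obtain ⟨x, hx, hx1 : x * (a + g x) = 1⟩ := intermediate_value_Icc (one_div_pos.2 ha).le
    (continuousOn_id.mul (continuousOn_const.add hcont)) ⟨h0.trans_le zero_le_one, h1.le⟩
  refine ⟨x, ⟨⟨hx.1.lt_of_ne ?_, hx.2.lt_of_ne ?_⟩, hx1⟩, fun y hy => ?_⟩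
  · rintro rfl
    linarith
  · rintro rfl
    linarith
  · exact hmono.injOn (Ioo_subset_Icc_self hy.1) hx (hy.2.trans hx1.symm)

lemma existsUnique_mul_add_eq_one_of_lipschitzOnWith {L : ℝ≥0}
    (hg : LipschitzOnWith L g (Icc 0 1)) (hg0 : ∀ x ∈ Icc 0 1, 0 < g x) (ha : 1 + L < a) :
    ∃! x, x ∈ Ioo 0 (1 / a) ∧ x * (a + g x) = 1 := by
  have ha0 : 0 < a := by linarith [L.coe_nonneg]
  have hsub : Icc 0 (1 / a) ⊆ Icc (0 : ℝ) 1 :=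
    Icc_subset_Icc_right ((div_le_one ha0).2 (by linarith [L.coe_nonneg]))
  refine existsUnique_mul_add_eq_one ha0 (hg.continuousOn.mono hsub)
    (hg0 _ (hsub (right_mem_Icc.2 (one_div_pos.2 ha0).le)))
    (strictMonoOn_mul_add ha0 L.coe_nonneg (by nlinarith [L.coe_nonneg])
      (fun x hx => (hg0 x (hsub hx)).le) fun x hx y hy hxy => ?_)
  have := hg.dist_le_mul y (hsub hy) x (hsub hx)
  rw [Real.dist_eq, Real.dist_eq, abs_of_nonneg (sub_nonneg.2 hxy)] at this
  linarith [neg_abs_le (g y - g x)]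

end RootOfMulAdd

lemma exists_lipschitzOnWith_root {τ : ℝ} {g : ℝ × ℝ → ℝ} {s : Set ℝ} {L : ℝ≥0} (hτ : 0 < τ)
    (hg : ∀ p, 0 < g p) (hmono : ∀ x, Monotone fun t => g (x, t))
    (hL : LipschitzOnWith L g (s ×ˢ Icc 0 (1 / τ))) :
    ∃ φ : ℝ → ℝ, (∃ C, LipschitzOnWith C φ s) ∧
      ∀ x ∈ s, ∀ t, t ∈ Ioo 0 (1 / τ) ∧ t * (τ + g (x, t)) = 1 ↔ t = φ x := by
  have hroot : ∀ x ∈ s, ∃! t, t ∈ Ioo 0 (1 / τ) ∧ t * (τ + g (x, t)) = 1 := fun x hx =>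
    existsUnique_mul_add_eq_one hτ
      (hL.continuousOn.comp (continuousOn_const.prodMk continuousOn_id) fun t ht => ⟨hx, ht⟩)
      (hg _)
      (strictMonoOn_mul_add hτ le_rfl (by positivity) (fun t _ => (hg _).le)
        fun t _ t' _ htt' => by simpa using hmono x htt')
  choose! φ hφ hφ_unique using hroot
  refine ⟨φ, ⟨(L / τ ^ 2).toNNReal, LipschitzOnWith.of_dist_le_mul fun x hx x' hx' => ?_⟩,
    fun x hx t => ⟨hφ_unique x hx t, fun h => h ▸ hφ x hx⟩⟩
  rw [Real.coe_toNNReal _ (by positivity), Real.dist_eq, Real.dist_eq]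
  wlog hle : φ x ≤ φ x' generalizing x x'
  · rw [abs_sub_comm, abs_sub_comm x]
    exact this x' hx' x hx (le_of_not_ge hle)
  obtain ⟨⟨hφx, -⟩, hx1⟩ := hφ x hx
  obtain ⟨⟨hφx', hφx'τ⟩, hx'1⟩ := hφ x' hx'
  have hincr := sub_div_mul_sub_le_mul_add_sub_mul_add (g := fun t => g (x, t)) le_rfl hφx.le
    (hle.trans hφx'τ.le) hle (hg _).le (by simpa using hmono x hle)
  have hlip := hL.dist_le_mul (x, φ x') ⟨hx, hφx'.le, hφx'τ.le⟩ (x', φ x')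
    ⟨hx', hφx'.le, hφx'τ.le⟩
  rw [dist_prod_same_right, Real.dist_eq, Real.dist_eq] at hlip
  -- by the two root equations, the increment in `hincr` is `φ x' * (g (x, φ x') - g (x', φ x'))`
  have hkey : τ * (φ x' - φ x) ≤ 1 / τ * (L * |x - x'|) := by
    have h : φ x' * (g (x, φ x') - g (x', φ x')) ≤ 1 / τ * (L * |x - x'|) :=
      calc _ ≤ φ x' * (L * |x - x'|) :=
            mul_le_mul_of_nonneg_left ((le_abs_self _).trans hlip) hφx'.le
        _ ≤ _ := mul_le_mul_of_nonneg_right hφx'τ.le (by positivity)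
    simp only [zero_div, sub_zero] at hincr
    linarith
  rw [abs_of_nonpos (sub_nonpos.2 hle), neg_sub]
  calc φ x' - φ x = τ * (φ x' - φ x) / τ := by field_simp
    _ ≤ 1 / τ * (L * |x - x'|) / τ := by gcongr
    _ = L / τ ^ 2 * |x - x'| := by field_simp

theorem existsUnique_steady_state {τI : ℝ} {g₁ g₂ : ℝ × ℝ → ℝ} (hτI : 0 < τI)
    (hg₁ : ∀ p, 0 < g₁ p) (hg₂ : ∀ p, 0 < g₂ p) (hmono : ∀ x, Monotone fun t => g₂ (x, t))
    (hg₁_lip : LocallyLipschitz g₁) (hg₂_lip : LocallyLipschitz g₂) :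
    ∃ T > 0, ∀ τE, T < τE → ∃! p : ℝ × ℝ, p.1 ∈ Ioo 0 (1 / τE) ∧ p.2 ∈ Ioo 0 (1 / τI) ∧
      p.1 * (τE + g₁ p) = 1 ∧ p.2 * (τI + g₂ p) = 1 := by
  have hbox : IsCompact (Icc (0 : ℝ) 1 ×ˢ Icc 0 (1 / τI)) := isCompact_Icc.prod isCompact_Icc
  obtain ⟨L₁, hL₁⟩ := hg₁_lip.locallyLipschitzOn.exists_lipschitzOnWith_of_compact hbox
  obtain ⟨L₂, hL₂⟩ := hg₂_lip.locallyLipschitzOn.exists_lipschitzOnWith_of_compact hbox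
  obtain ⟨φ, ⟨C, hφ⟩, hroot⟩ := exists_lipschitzOnWith_root hτI hg₂ hmono hL₂
  have hφ_mem : ∀ x ∈ Icc (0 : ℝ) 1, φ x ∈ Ioo 0 (1 / τI) := fun x hx =>
    ((hroot x hx _).2 rfl).1
  have hG : LipschitzOnWith (L₁ * max 1 C) (fun x => g₁ (x, φ x)) (Icc 0 1) :=
    hL₁.comp (LipschitzWith.id.lipschitzOnWith.prodMk hφ) fun x hx =>
      ⟨hx, Ioo_subset_Icc_self (hφ_mem x hx)⟩
  refine ⟨1 + L₁ * max 1 C, by positivity, fun τE hτE => ?_⟩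
  obtain ⟨x, ⟨hx, hx1⟩, hx_unique⟩ :=
    existsUnique_mul_add_eq_one_of_lipschitzOnWith hG (fun _ _ => hg₁ _) hτE
  have hτE₁ : 1 < τE := lt_of_le_of_lt (le_add_of_nonneg_right (by positivity)) hτE
  have hsub : Ioo 0 (1 / τE) ⊆ Icc (0 : ℝ) 1 :=
    Ioo_subset_Icc_self.trans (Icc_subset_Icc_right (div_le_one_of_le₀ hτE₁.le (by linarith)))
  refine ⟨(x, φ x), ⟨hx, hφ_mem x (hsub hx), hx1, ((hroot x (hsub hx) _).2 rfl).2⟩, ?_⟩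
  rintro ⟨y, t⟩ ⟨hy, ht, hy1, ht1⟩
  obtain rfl : t = φ y := (hroot y (hsub hy) t).1 ⟨ht, ht1⟩
  rw [hx_unique y ⟨hy, hy1⟩]

theorem unique_steady_state_large_tauE_general (VR VF bEE bIE bEI bII τI aE aI ν : ℝ)
    (hV : VR < VF) (hbII : 0 < bII)
    (hτI : 0 < τI) (haE : 0 < aE) (haI : 0 < aI) :
    ∃ T > 0, ∀ τE : ℝ, T < τE →
      ∃! p : ℝ × ℝ, p.1 ∈ Set.Ioo 0 (1 / τE) ∧ p.2 ∈ Set.Ioo 0 (1 / τI) ∧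
        p.1 * (τE + I1 VR VF bEE bIE aE ν p.1 p.2) = 1 ∧
        p.2 * (τI + I2 VR VF bEE bEI bII aI ν p.1 p.2) = 1 := by
  have hσE : 0 < √aE := sqrt_pos.2 haE
  have hσI : 0 < √aI := sqrt_pos.2 haI
  refine existsUnique_steady_state (g₁ := fun p => I1 VR VF bEE bIE aE ν p.1 p.2)
    (g₂ := fun p => I2 VR VF bEE bEI bII aI ν p.1 p.2) hτI
    (fun _ => K_sub_div_pos hV hσE _) (fun _ => K_sub_div_pos hV hσI _)
    (fun x => Antitone.comp (antitone_K_sub_div hV.le hσI)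
      (f := fun t => bEI * x - bII * t + (bEI - bEE) * ν) fun t t' htt' => ?_)
    (locallyLipschitz_K_sub_div VR VF √aE (by fun_prop))
    (locallyLipschitz_K_sub_div VR VF √aI (by fun_prop))
  dsimp only
  gcongr

theorem unique_steady_state_large_tauE (VR VF bEE bIE bEI bII τI aE aI ν : ℝ)
    (hV : VR < VF) (hbEE : 0 < bEE) (hbIE : 0 < bIE) (hbEI : 0 < bEI) (hbII : 0 < bII)
    (hτI : 0 < τI) (haE : 0 < aE) (haI : 0 < aI) (hν : 0 ≤ ν) :
    ∃ T > 0, ∀ τE : ℝ, T < τE →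
      ∃! p : ℝ × ℝ, p.1 ∈ Set.Ioo 0 (1 / τE) ∧ p.2 ∈ Set.Ioo 0 (1 / τI) ∧
        p.1 * (τE + I1 VR VF bEE bIE aE ν p.1 p.2) = 1 ∧
        p.2 * (τI + I2 VR VF bEE bEI bII aI ν p.1 p.2) = 1 :=
  unique_steady_state_large_tauE_general VR VF bEE bIE bEI bII τI aE aI ν hV hbII hτI haE haI
end

section
/- The implicitly defined function N_E ↦ N_I(N_E) is differentiable and strictly increasing on [0,∞), with derivative N_I'(N_E) = b_E^I · N_I(N_E)² · I(N_E) / (√a_I + b_I^I · N_I(N_E)² · I(N_E)); consequently 0 < N_I'(N_E) < b_E^I / b_I^I for all N_E ≥ 0. -/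
/-- I(N_E) := ∫_0^∞ e^{-s²/2} · exp(−(b_E^I N_E − b_I^I N_I(N_E) + (b_E^I − b_E^E)ν)s/√a_I)
· (e^{s V_F/√a_I} − e^{s V_R/√a_I}) ds, where N_I(·) is the implicitly defined function. -/
noncomputable def Ifun (VR VF bEE bEI bII aI ν : ℝ) (NIfun : ℝ → ℝ) (NE : ℝ) : ℝ :=
  ∫ s in Set.Ioi (0 : ℝ),
    Real.exp (-s ^ 2 / 2) *
      Real.exp (-((bEI * NE - bII * NIfun NE + (bEI - bEE) * ν) * s) / Real.sqrt aI) *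
      (Real.exp (s * VF / Real.sqrt aI) - Real.exp (s * VR / Real.sqrt aI))

/-!
Write `F V = K ((V_R - V) / √a_I) ((V_F - V) / √a_I)`. Differentiating under the integral sign
gives `F' V = -I / √a_I < 0`, so `F` is strictly decreasing. Subtracting the self-consistency
equation at two points gives `N_I x - N_I y = N_I x N_I y (F (V y) - F (V x))` for the potential
`V = b_E^I N_E - b_I^I N_I + κ`, so `N_I x - N_I y` has the sign of
`V x - V y = b_E^I (x - y) - b_I^I (N_I x - N_I y)`. This gives strict monotonicity and the
Lipschitz bound `b_I^I |ΔN_I| ≤ b_E^I |ΔN_E|`, hence continuity. Writing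
`F (V y) - F (V x) = (V y - V x) · dslope F (V x) (V y)`, the same identity can be solved for the
difference quotient of `N_I`, and the dslope tends to `F' (V x)`.
-/

open MeasureTheory Filter Set Real Topology

theorem abs_exp_sub_exp_le_s9 (x y : ℝ) : |exp x - exp y| ≤ |x - y| * (exp x + exp y) := by
  wlog hyx : y ≤ x generalizing x y
  · rw [abs_sub_comm, abs_sub_comm x, add_comm]
    exact this y x (le_of_not_ge hyx)
  have htangent := mul_le_mul_of_nonneg_left (add_one_le_exp (y - x)) (exp_pos x).le
  rw [← exp_add, add_sub_cancel] at htangent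
  rw [abs_of_nonneg (sub_nonneg.2 (exp_le_exp.2 hyx)), abs_of_nonneg (sub_nonneg.2 hyx)]
  nlinarith [exp_pos y]

theorem integrable_exp_neg_sq_div_two_mul_exp (w : ℝ) :
    Integrable fun s : ℝ => exp (-s ^ 2 / 2) * exp (s * w) := by
  have h := ((integrable_exp_neg_mul_sq (by norm_num : (0 : ℝ) < 1 / 2)).comp_sub_right w).const_mul
    (exp (w ^ 2 / 2))
  refine h.congr (ae_of_all _ fun s => ?_)
  simp only [← exp_add]
  ring_nf

theorem integrableOn_K_integrand (wR wF : ℝ) :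
    IntegrableOn (fun s : ℝ => exp (-s ^ 2 / 2) / s * (exp (s * wF) - exp (s * wR))) (Ioi 0) := by
  refine (((integrable_exp_neg_sq_div_two_mul_exp wF).add
    (integrable_exp_neg_sq_div_two_mul_exp wR)).const_mul |wF - wR|).integrableOn.mono'
    ((by fun_prop : Measurable fun s : ℝ => _).aestronglyMeasurable) ?_
  filter_upwards [ae_restrict_mem measurableSet_Ioi] with s (hs : 0 < s)
  calc ‖exp (-s ^ 2 / 2) / s * (exp (s * wF) - exp (s * wR))‖
      = exp (-s ^ 2 / 2) / s * |exp (s * wF) - exp (s * wR)| := by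
        rw [norm_mul, Real.norm_of_nonneg (by positivity)]; rfl
    _ ≤ exp (-s ^ 2 / 2) / s * (|s * wF - s * wR| * (exp (s * wF) + exp (s * wR))) := by
        gcongr; exact abs_exp_sub_exp_le_s9 _ _
    _ = |wF - wR| * (exp (-s ^ 2 / 2) * exp (s * wF) + exp (-s ^ 2 / 2) * exp (s * wR)) := by
        rw [← mul_sub, abs_mul, abs_of_pos hs]; field_simp

noncomputable def Kderiv (wR wF : ℝ) : ℝ :=
  ∫ s in Ioi (0 : ℝ), exp (-s ^ 2 / 2) * (exp (s * wF) - exp (s * wR))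

theorem Kderiv_pos {wR wF : ℝ} (h : wR < wF) : 0 < Kderiv wR wF := by
  have hpos : ∀ s ∈ Ioi (0 : ℝ), 0 < exp (-s ^ 2 / 2) * (exp (s * wF) - exp (s * wR)) :=
    fun s (hs : 0 < s) => mul_pos (exp_pos _) (sub_pos.2 (exp_lt_exp.2 (by gcongr)))
  have hint : IntegrableOn (fun s : ℝ => exp (-s ^ 2 / 2) * (exp (s * wF) - exp (s * wR)))
      (Ioi 0) := by
    simpa only [mul_sub, Pi.sub_def] using ((integrable_exp_neg_sq_div_two_mul_exp wF).sub
      (integrable_exp_neg_sq_div_two_mul_exp wR)).integrableOn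
  rw [Kderiv, setIntegral_pos_iff_support_of_nonneg_ae
    ((ae_restrict_iff' measurableSet_Ioi).2 (ae_of_all _ fun s hs => (hpos s hs).le)) hint]
  exact (by simp : (0 : ENNReal) < volume (Ioi (0 : ℝ))).trans_le
    (measure_mono fun s hs => ⟨(hpos s hs).ne', hs⟩)

theorem hasDerivAt_K_add (wR wF : ℝ) :
    HasDerivAt (fun t => K (wR + t) (wF + t)) (Kderiv wR wF) 0 := by
  have hmain := hasDerivAt_integral_of_dominated_loc_of_deriv_le (μ := volume.restrict (Ioi 0))
    (F := fun t s : ℝ => exp (-s ^ 2 / 2) / s * (exp (s * (wF + t)) - exp (s * (wR + t))))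
    (F' := fun t s : ℝ => exp (-s ^ 2 / 2) * (exp (s * (wF + t)) - exp (s * (wR + t))))
    (bound := fun s : ℝ => exp (-s ^ 2 / 2) * exp (s * (wF + 1)) +
      exp (-s ^ 2 / 2) * exp (s * (wR + 1)))
    (Metric.ball_mem_nhds 0 one_pos)
    (Eventually.of_forall fun t => (integrableOn_K_integrand _ _).aestronglyMeasurable)
    (integrableOn_K_integrand _ _) (by fun_prop) ?bound
    ((integrable_exp_neg_sq_div_two_mul_exp _).add
      (integrable_exp_neg_sq_div_two_mul_exp _)).integrableOn ?deriv
  · simpa only [K, Kderiv, add_zero] using hmain.2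
  case bound =>
    filter_upwards [ae_restrict_mem measurableSet_Ioi] with s (hs : 0 < s) t ht
    have ht : t ≤ 1 := (abs_lt.1 (mem_ball_zero_iff.1 ht)).2.le
    rw [Real.norm_eq_abs, abs_mul, abs_of_pos (exp_pos _), ← mul_add]
    gcongr
    refine (abs_sub _ _).trans (add_le_add ?_ ?_) <;>
      rw [abs_of_pos (exp_pos _)] <;> gcongr
  case deriv =>
    filter_upwards [ae_restrict_mem measurableSet_Ioi] with s (hs : 0 < s) t _
    have hexp (w : ℝ) : HasDerivAt (fun t => exp (s * (w + t))) (exp (s * (w + t)) * s) t := by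
      simpa using (((hasDerivAt_id t).const_add w).const_mul s).exp
    refine (((hexp wF).sub (hexp wR)).const_mul (exp (-s ^ 2 / 2) / s)).congr_deriv ?_
    field_simp

theorem hasDerivAt_K_sub_div (VR VF r u : ℝ) :
    HasDerivAt (fun v => K ((VR - v) / r) ((VF - v) / r))
      (-Kderiv ((VR - u) / r) ((VF - u) / r) / r) u := by
  have hshift : HasDerivAt (fun v => (u - v) / r) (-1 / r) u := by
    simpa using ((hasDerivAt_id u).const_sub u).div_const r
  have h := (hasDerivAt_K_add ((VR - u) / r) ((VF - u) / r)).comp_of_eq u hshift (by simp)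
  refine (h.congr_deriv (by ring)).congr_of_eventuallyEq (Eventually.of_forall fun v => ?_)
  simp only [Function.comp_apply, ← add_div, sub_add_sub_cancel]

theorem Ifun_eq_Kderiv (VR VF bEE bEI bII aI ν : ℝ) (NIfun : ℝ → ℝ) (NE : ℝ) :
    Ifun VR VF bEE bEI bII aI ν NIfun NE =
      Kderiv ((VR - (bEI * NE - bII * NIfun NE + (bEI - bEE) * ν)) / Real.sqrt aI)
        ((VF - (bEI * NE - bII * NIfun NE + (bEI - bEE) * ν)) / Real.sqrt aI) := by
  unfold Ifun Kderiv
  congr 1 with s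
  simp only [mul_sub, ← exp_add]
  ring_nf

/-- With `F V = K ((V_R - V) / √a_I) ((V_F - V) / √a_I)`, `x = N_E`, `a = b_E^I`, `b = b_I^I` and
`κ = (b_E^I - b_E^E) ν_{E,ext}`, this is the equation `N_I (τ_I + I₂(N_E, N_I)) = 1`. -/
def SolvesRateEquation (F : ℝ → ℝ) (τ a b κ : ℝ) (s : Set ℝ) (N : ℝ → ℝ) : Prop :=
  ∀ x ∈ s, 0 < N x ∧ N x * (τ + F (a * x - b * N x + κ)) = 1

namespace SolvesRateEquation

variable {F N : ℝ → ℝ} {τ a b κ : ℝ} {s : Set ℝ} {x y : ℝ}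

theorem sub_eq (h : SolvesRateEquation F τ a b κ s N) (hx : x ∈ s) (hy : y ∈ s) :
    N x - N y = N x * N y * (F (a * y - b * N y + κ) - F (a * x - b * N x + κ)) := by
  linear_combination N y * (h x hx).2 - N x * (h y hy).2

theorem strictMonoOn (h : SolvesRateEquation F τ a b κ s N) (hF : StrictAnti F) (ha : 0 < a)
    (hb : 0 ≤ b) : StrictMonoOn N s := by
  intro x hx y hy hxy
  by_contra! hNyx
  have hpot : a * x - b * N x + κ < a * y - b * N y + κ := by nlinarith
  have hprod : 0 < N x * N y := mul_pos (h x hx).1 (h y hy).1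
  have := h.sub_eq hx hy
  nlinarith [hF hpot]

theorem mul_abs_sub_le (h : SolvesRateEquation F τ a b κ s N) (hF : Antitone F) (ha : 0 ≤ a)
    (hx : x ∈ s) (hy : y ∈ s) : b * |N x - N y| ≤ a * |x - y| := by
  set Vx := a * x - b * N x + κ
  set Vy := a * y - b * N y + κ
  have hanti : 0 ≤ (F Vy - F Vx) * (Vx - Vy) := by
    rcases le_total Vx Vy with hV | hV
    · exact mul_nonneg_of_nonpos_of_nonpos (sub_nonpos.2 (hF hV)) (sub_nonpos.2 hV)
    · exact mul_nonneg (sub_nonneg.2 (hF hV)) (sub_nonneg.2 hV)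
  have hsign : 0 ≤ (N x - N y) * (Vx - Vy) := by
    rw [h.sub_eq hx hy, mul_assoc]
    exact mul_nonneg (mul_pos (h x hx).1 (h y hy).1).le hanti
  have hsq : b * |N x - N y| * |N x - N y| ≤ a * |x - y| * |N x - N y| := by
    have hVxy : Vx - Vy = a * (x - y) - b * (N x - N y) := by ring
    rw [hVxy] at hsign
    calc b * |N x - N y| * |N x - N y| = b * ((N x - N y) * (N x - N y)) := by
          rw [mul_assoc, abs_mul_abs_self]
      _ ≤ a * ((x - y) * (N x - N y)) := by linarith
      _ ≤ a * (|x - y| * |N x - N y|) :=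
          mul_le_mul_of_nonneg_left ((le_abs_self _).trans (abs_mul _ _).le) ha
      _ = a * |x - y| * |N x - N y| := by ring
  rcases (abs_nonneg (N x - N y)).eq_or_lt with hd | hd
  · rw [← hd, mul_zero]
    positivity
  · exact le_of_mul_le_mul_right hsq hd

theorem continuousWithinAt (h : SolvesRateEquation F τ a b κ s N) (hF : Antitone F) (ha : 0 ≤ a)
    (hb : 0 < b) (hx : x ∈ s) : ContinuousWithinAt N s x := by
  refine (LipschitzOnWith.of_dist_le' (K := a / b) fun y hy z hz => ?_).continuousOn x hx
  rw [Real.dist_eq, Real.dist_eq, div_mul_eq_mul_div, le_div_iff₀' hb]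
  exact h.mul_abs_sub_le hF ha hy hz

theorem hasDerivWithinAt (h : SolvesRateEquation F τ a b κ s N) (hF : Antitone F) (ha : 0 ≤ a)
    (hb : 0 < b) (hx : x ∈ s) {F' : ℝ} (hF' : HasDerivAt F F' (a * x - b * N x + κ)) :
    HasDerivWithinAt N (-a * N x ^ 2 * F' / (1 - b * N x ^ 2 * F')) s x := by
  set σ : ℝ → ℝ := fun y => dslope F (a * x - b * N x + κ) (a * y - b * N y + κ)
  have hσ : Tendsto σ (𝓝[s] x) (𝓝 F') := by
    have hN := h.continuousWithinAt hF ha hb hx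
    have hV : ContinuousWithinAt (fun y => a * y - b * N y + κ) s x := by fun_prop
    have := (continuousAt_dslope_same.2 hF'.differentiableAt).tendsto.comp hV.tendsto
    rwa [dslope_same, hF'.deriv] at this
  set q : ℝ → ℝ := fun y => N y * N x * σ y
  have hq : Tendsto q (𝓝[s] x) (𝓝 (N x ^ 2 * F')) := by
    simpa only [sq] using ((h.continuousWithinAt hF ha hb hx).tendsto.mul_const (N x)).mul hσ
  have hden : 0 < 1 - b * (N x ^ 2 * F') := by
    have := mul_nonpos_of_nonneg_of_nonpos (by positivity : 0 ≤ N x ^ 2)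
      (hF'.nonpos_of_antitone hF)
    nlinarith
  have hidentity : ∀ y ∈ s, (N y - N x) * (1 - b * q y) = -a * q y * (y - x) := by
    intro y hy
    have hF_sub : F (a * y - b * N y + κ) - F (a * x - b * N x + κ) =
        ((a * y - b * N y + κ) - (a * x - b * N x + κ)) * σ y :=
      (sub_smul_dslope F _ _).symm
    linear_combination h.sub_eq hy hx - N y * N x * hF_sub
  suffices Tendsto (slope N x) (𝓝[s \ {x}] x) (𝓝 (-a * (N x ^ 2 * F') / (1 - b * (N x ^ 2 * F'))))
    by rw [hasDerivWithinAt_iff_tendsto_slope]; simpa only [mul_assoc] using this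
  have hden_lim := (hq.const_mul b).const_sub 1
  refine (((hq.const_mul (-a)).div hden_lim hden.ne').mono_left
    (nhdsWithin_mono _ sdiff_subset)).congr' ?_
  filter_upwards [(hden_lim.eventually (lt_mem_nhds hden)).filter_mono
    (nhdsWithin_mono _ sdiff_subset), self_mem_nhdsWithin] with y hy ⟨hys, hyx⟩
  rw [Pi.div_apply, slope_def_field, div_eq_div_iff hy.ne' (sub_ne_zero.2 hyx)]
  linear_combination -(hidentity y hys)

end SolvesRateEquation

theorem NIfun_deriv_general (VR VF bEE bEI bII τI aI ν : ℝ)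
    (hV : VR < VF) (hbEI : 0 < bEI) (hbII : 0 < bII)
    (haI : 0 < aI)
    (NIfun : ℝ → ℝ)
    (hNIfun : ∀ NE : ℝ, 0 ≤ NE → NIfun NE ∈ Set.Ioo 0 (1 / τI) ∧
      NIfun NE * (τI + I2 VR VF bEE bEI bII aI ν NE (NIfun NE)) = 1) :
    StrictMonoOn NIfun (Set.Ici 0) ∧
    ∀ NE ∈ Set.Ici (0 : ℝ),
      HasDerivWithinAt NIfun
        (bEI * (NIfun NE) ^ 2 * Ifun VR VF bEE bEI bII aI ν NIfun NE /
          (Real.sqrt aI + bII * (NIfun NE) ^ 2 * Ifun VR VF bEE bEI bII aI ν NIfun NE))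
        (Set.Ici 0) NE ∧
      0 < bEI * (NIfun NE) ^ 2 * Ifun VR VF bEE bEI bII aI ν NIfun NE /
          (Real.sqrt aI + bII * (NIfun NE) ^ 2 * Ifun VR VF bEE bEI bII aI ν NIfun NE) ∧
      bEI * (NIfun NE) ^ 2 * Ifun VR VF bEE bEI bII aI ν NIfun NE /
          (Real.sqrt aI + bII * (NIfun NE) ^ 2 * Ifun VR VF bEE bEI bII aI ν NIfun NE) <
        bEI / bII := by
  have hr : 0 < √aI := Real.sqrt_pos.2 haI
  set F : ℝ → ℝ := fun V => K ((VR - V) / √aI) ((VF - V) / √aI)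
  have hFderiv (V : ℝ) : HasDerivAt F (-Kderiv ((VR - V) / √aI) ((VF - V) / √aI) / √aI) V :=
    hasDerivAt_K_sub_div VR VF √aI V
  have hKderiv_pos (V : ℝ) : 0 < Kderiv ((VR - V) / √aI) ((VF - V) / √aI) :=
    Kderiv_pos (by gcongr)
  have hF : StrictAnti F :=
    strictAnti_of_hasDerivAt_neg hFderiv fun V =>
      div_neg_of_neg_of_pos (neg_neg_of_pos (hKderiv_pos V)) hr
  have hsol : SolvesRateEquation F τI bEI bII ((bEI - bEE) * ν) (Ici 0) NIfun :=
    fun NE hNE => ⟨(hNIfun NE hNE).1.1, (hNIfun NE hNE).2⟩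
  refine ⟨hsol.strictMonoOn hF hbEI hbII.le, fun NE hNE => ?_⟩
  rw [Ifun_eq_Kderiv]
  have hJ := hKderiv_pos (bEI * NE - bII * NIfun NE + (bEI - bEE) * ν)
  have hN := (hNIfun NE hNE).1.1
  refine ⟨(hsol.hasDerivWithinAt hF.antitone hbEI.le hbII hNE (hFderiv _)).congr_deriv ?_,
    by positivity, ?_⟩
  · field_simp
    ring
  · rw [div_lt_div_iff₀ (by positivity) hbII]
    nlinarith [mul_pos hbEI hr]

theorem NIfun_deriv (VR VF bEE bIE bEI bII τI aE aI ν : ℝ)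
    (hV : VR < VF) (hbEE : 0 < bEE) (hbIE : 0 < bIE) (hbEI : 0 < bEI) (hbII : 0 < bII)
    (hτI : 0 < τI) (haE : 0 < aE) (haI : 0 < aI) (hν : 0 ≤ ν)
    (NIfun : ℝ → ℝ)
    (hNIfun : ∀ NE : ℝ, 0 ≤ NE → NIfun NE ∈ Set.Ioo 0 (1 / τI) ∧
      NIfun NE * (τI + I2 VR VF bEE bEI bII aI ν NE (NIfun NE)) = 1) :
    StrictMonoOn NIfun (Set.Ici 0) ∧
    ∀ NE ∈ Set.Ici (0 : ℝ),
      HasDerivWithinAt NIfun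
        (bEI * (NIfun NE) ^ 2 * Ifun VR VF bEE bEI bII aI ν NIfun NE /
          (Real.sqrt aI + bII * (NIfun NE) ^ 2 * Ifun VR VF bEE bEI bII aI ν NIfun NE))
        (Set.Ici 0) NE ∧
      0 < bEI * (NIfun NE) ^ 2 * Ifun VR VF bEE bEI bII aI ν NIfun NE /
          (Real.sqrt aI + bII * (NIfun NE) ^ 2 * Ifun VR VF bEE bEI bII aI ν NIfun NE) ∧
      bEI * (NIfun NE) ^ 2 * Ifun VR VF bEE bEI bII aI ν NIfun NE /
          (Real.sqrt aI + bII * (NIfun NE) ^ 2 * Ifun VR VF bEE bEI bII aI ν NIfun NE) <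
        bEI / bII :=
  NIfun_deriv_general VR VF bEE bEI bII τI aI ν hV hbEI hbII haI NIfun hNIfun
end
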